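/- Let y > 0 and x₀ ∈ ℝ, and let x : [1,T) → ℝ be differentiable with x(1) = x₀ and ẋ(t) = y·t^{−1} / √(1 + y²·t^{−1}) for all t ∈ [1,T). Then x(t) ≥ y·log(t) + x₀ − m(y) for all t ∈ [1,T), where m(y) := |2y·log(2·y^{−2}·(√(y² + 1) − 1))|. -/

import Mathlib

/-- The deficit `m(y) = |2y·log(2·y^{−2}·(√(y²+1) − 1))|`. -/
noncomputable def mDeficit (y : ℝ) : ℝ :=
  |2 * y * Real.log (2 / y ^ 2 * (Real.sqrt (y ^ 2 + 1) - 1))|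

lemma mDeficit_eq {y : ℝ} (hy : 0 < y) :
    mDeficit y = 2 * y * Real.log ((Real.sqrt (y ^ 2 + 1) + 1) / 2) := by
  have hs1 : (1:ℝ) < Real.sqrt (y ^ 2 + 1) := by
    have : (1:ℝ) < y ^ 2 + 1 := by nlinarith
    calc (1:ℝ) = Real.sqrt 1 := (Real.sqrt_one).symm
    _ < Real.sqrt (y ^ 2 + 1) := Real.sqrt_lt_sqrt (by norm_num) this
  set s := Real.sqrt (y ^ 2 + 1) with hs
  have hsq : s ^ 2 = y ^ 2 + 1 := Real.sq_sqrt (by positivity)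
  have harg : 2 / y ^ 2 * (s - 1) = 2 / (s + 1) := by
    have hy0 : y ≠ 0 := hy.ne'
    have hs1' : s + 1 ≠ 0 := by linarith
    field_simp
    nlinarith [hsq]
  have hlog : Real.log (2 / (s + 1)) = - Real.log ((s + 1) / 2) := by
    rw [← Real.log_inv]; congr 1; field_simp
  have hlognn : 0 ≤ Real.log ((s + 1) / 2) := by
    apply Real.log_nonneg; linarith
  rw [mDeficit, harg, hlog]
  rw [abs_of_nonpos (by nlinarith)]; ring

/-- The curve `γ⁻(t) = y·log t + x₀ − m(y)` is a lower envelope of the dust characteristic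
(case `α = 1/2`) solving `ẋ(t) = y·t⁻¹/√(1 + y²·t⁻¹)`, `x(1) = x₀`. -/
theorem dust_characteristic_lower_envelope (y x₀ T : ℝ) (hy : 0 < y) (hT : 1 < T)
    (x : ℝ → ℝ) (hx1 : x 1 = x₀)
    (hx : ∀ t ∈ Set.Ico (1:ℝ) T, HasDerivAt x (y * t⁻¹ / Real.sqrt (1 + y ^ 2 * t⁻¹)) t) :
    ∀ t ∈ Set.Ico (1:ℝ) T, y * Real.log t + x₀ - mDeficit y ≤ x t := by
  set φ : ℝ → ℝ := fun t => 2 * y * Real.log (Real.sqrt t + Real.sqrt (t + y ^ 2)) with hφ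
  -- derivative of φ
  have hφderiv : ∀ t : ℝ, 1 ≤ t →
      HasDerivAt φ (y * t⁻¹ / Real.sqrt (1 + y ^ 2 * t⁻¹)) t := by
    intro t ht
    have ht0 : (0:ℝ) < t := by linarith
    have hta : (0:ℝ) < Real.sqrt t := Real.sqrt_pos.2 ht0
    have htb0 : (0:ℝ) < t + y ^ 2 := by positivity
    have htb : (0:ℝ) < Real.sqrt (t + y ^ 2) := Real.sqrt_pos.2 htb0
    set a := Real.sqrt t
    set b := Real.sqrt (t + y ^ 2)
    have ha2 : a ^ 2 = t := Real.sq_sqrt ht0.le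
    have hb2 : b ^ 2 = t + y ^ 2 := Real.sq_sqrt htb0.le
    have h1 : HasDerivAt Real.sqrt (1 / (2 * a)) t := Real.hasDerivAt_sqrt ht0.ne'
    have h2' : HasDerivAt (fun u : ℝ => u + y ^ 2) 1 t := (hasDerivAt_id t).add_const _
    have h2 : HasDerivAt (fun u : ℝ => Real.sqrt (u + y ^ 2)) (1 / (2 * b)) t := by
      have := (Real.hasDerivAt_sqrt htb0.ne').comp t h2'
      exact this.congr_deriv (by simp [b])
    have hsum := h1.add h2
    have hab : (0:ℝ) < a + b := by linarith
    have hlog := (Real.hasDerivAt_log hab.ne').comp t hsum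
    have hfinal := hlog.const_mul (2 * y)
    refine hfinal.congr_deriv ?_
    have hsq : Real.sqrt (1 + y ^ 2 * t⁻¹) = b / a := by
      have : 1 + y ^ 2 * t⁻¹ = (t + y ^ 2) / t := by field_simp
      rw [this, Real.sqrt_div htb0.le]
    rw [hsq, ← ha2]
    field_simp
    ring
  -- x = φ - φ 1 + x₀ on [1, T)
  have hxeq : ∀ t ∈ Set.Ico (1:ℝ) T, x t = φ t - φ 1 + x₀ := by
    intro t ht
    obtain ⟨ht1, htT⟩ := ht
    rcases eq_or_lt_of_le ht1 with rfl | ht1'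
    · simp [hx1]
    have key := constant_of_has_deriv_right_zero (f := fun u => x u - φ u) (a := 1) (b := t)
      (hcont := by
        intro u hu
        have huT : u ∈ Set.Ico (1:ℝ) T := ⟨hu.1, lt_of_le_of_lt hu.2 htT⟩
        exact (((hx u huT).sub (hφderiv u hu.1)).continuousAt).continuousWithinAt)
      (hderiv := by
        intro u hu
        have huT : u ∈ Set.Ico (1:ℝ) T := ⟨hu.1, lt_of_lt_of_le hu.2 htT.le⟩
        have := (hx u huT).sub (hφderiv u hu.1)
        exact this.hasDerivWithinAt.congr_deriv (sub_self _))
    have := key t ⟨ht1, le_refl t⟩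
    have hx1' : x 1 - φ 1 = x₀ - φ 1 := by rw [hx1]
    linarith [this, hx1'.symm ▸ this]
  -- final inequality
  intro t ht
  rw [hxeq t ht, mDeficit_eq hy]
  obtain ⟨ht1, htT⟩ := ht
  have ht0 : (0:ℝ) < t := by linarith
  have hta : (0:ℝ) < Real.sqrt t := Real.sqrt_pos.2 ht0
  have htb0 : (0:ℝ) < t + y ^ 2 := by positivity
  have htb : (0:ℝ) < Real.sqrt (t + y ^ 2) := Real.sqrt_pos.2 htb0
  set a := Real.sqrt t
  set b := Real.sqrt (t + y ^ 2)
  set s := Real.sqrt (y ^ 2 + 1)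
  have hφ1 : φ 1 = 2 * y * Real.log (1 + s) := by
    simp only [hφ]
    rw [Real.sqrt_one]
    congr 2
    rw [add_comm (1:ℝ) (y^2)]
  have hs0 : (0:ℝ) < s := Real.sqrt_pos.2 (by positivity)
  -- key : log t + 2 log 2 ≤ 2 log (a+b)
  have hba : a ≤ b := Real.sqrt_le_sqrt (by nlinarith)
  have hab : (0:ℝ) < a + b := by linarith
  have ha2 : a ^ 2 = t := Real.sq_sqrt ht0.le
  have hkey : Real.log (4 * t) ≤ Real.log ((a + b) ^ 2) := by
    apply Real.log_le_log (by positivity)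
    nlinarith
  have hlog4 : Real.log (4 * t) = Real.log 4 + Real.log t :=
    Real.log_mul (by norm_num) ht0.ne'
  have hlogab : Real.log ((a + b) ^ 2) = 2 * Real.log (a + b) := by
    rw [Real.log_pow]; push_cast; ring
  have hlog4' : Real.log 4 = 2 * Real.log 2 := by
    rw [show (4:ℝ) = 2 ^ 2 by norm_num, Real.log_pow]; push_cast; ring
  have hlogdiff : Real.log ((s + 1) / 2) = Real.log (s + 1) - Real.log 2 :=
    Real.log_div (by linarith) (by norm_num)
  simp only [hφ]
  rw [Real.sqrt_one, show Real.sqrt (1 + y ^ 2) = s from by rw [add_comm], hlogdiff,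
    show Real.log (1 + s) = Real.log (s + 1) from by rw [add_comm]]
  have h1 : Real.log t + 2 * Real.log 2 ≤ 2 * Real.log (a + b) := by
    rw [hlog4, hlog4', hlogab] at hkey; linarith
  nlinarith [mul_le_mul_of_nonneg_left h1 hy.le]
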